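/- For every [a] ∈ Λ₃: |Λ₁^3(a)| = 4, |Λ₂^2(a)| = 6, |Λ₂^3(a)| = 12, |Λ₂^6(a)| = 6, |Λ₃^2(a)| = 6, |Λ₃^3(a)| = 16, |Λ₃^6(a)| = 9, and |Λ₁^2(a)| = |Λ₁^6(a)| = 0. -/

import Mathlib

open Complex

noncomputable section

namespace G31

/-- Vectors `a = (a₁,a₂,a₃,a₄) ∈ ℂ⁴`. -/
abbrev V : Type := Fin 4 → ℂ

/-- `μ₄ ⊂ ℂ`, the group of fourth roots of unity `{1, i, -1, -i}`. -/
def mu4 : Set ℂ := {z : ℂ | z ^ 4 = 1}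

/-- `Ψ = μ₄ ∪ {0}`. -/
def Psi : Set ℂ := insert 0 mu4

/-- `a ∈ Ψ⁴`. -/
def PsiV (a : V) : Prop := ∀ k, a k ∈ Psi

/-- The diagonal multiplicative action of `μ₄` on `ℂ⁴`: `a ~ b` iff `b = ξ • a` for some
`ξ ∈ μ₄`. -/
def rel (a b : V) : Prop := ∃ ξ : ℂ, ξ ^ 4 = 1 ∧ b = ξ • a

theorem rel_refl (a : V) : rel a a := ⟨1, by norm_num, by simp⟩

theorem rel_symm {a b : V} (h : rel a b) : rel b a := by
  obtain ⟨ξ, hξ, rfl⟩ := h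
  refine ⟨ξ ^ 3, by rw [show (ξ ^ 3) ^ 4 = (ξ ^ 4) ^ 3 by ring, hξ, one_pow], ?_⟩
  rw [smul_smul, show ξ ^ 3 * ξ = ξ ^ 4 by ring, hξ, one_smul]

theorem rel_trans {a b c : V} (h : rel a b) (h' : rel b c) : rel a c := by
  obtain ⟨ξ, hξ, rfl⟩ := h
  obtain ⟨η, hη, rfl⟩ := h'
  exact ⟨η * ξ, by rw [mul_pow, hξ, hη, one_mul], by rw [smul_smul]⟩

/-- The setoid on `ℂ⁴` given by the diagonal `μ₄`-action. -/
def phiSetoid : Setoid V := ⟨rel, rel_refl, rel_symm, rel_trans⟩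

/-- `Φ`, the quotient of `Ψ⁴` (here of `ℂ⁴`) by the diagonal `μ₄`-action. -/
def Phi : Type := Quotient phiSetoid

/-- The class `[a] ∈ Φ` of `a`. -/
def cls (a : V) : Phi := Quotient.mk phiSetoid a

/-- `Supp a = {k : aₖ ≠ 0}`. -/
def Supp (a : V) : Set (Fin 4) := {k | a k ≠ 0}

/-- `prod a = a₁a₂a₃a₄`. -/
def prod4 (a : V) : ℂ := ∏ k, a k

/-- The hyperplane `X_a = {x : ∑ aₖ xₖ = 0} ⊂ ℂ⁴`. -/
def Xa (a : V) : Set V := {x | ∑ k, a k * x k = 0}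

/-- The support of a class `[a] ∈ Φ` (independent of the representative). -/
def SuppC (c : Phi) : Set (Fin 4) := {k | ∃ a : V, cls a = c ∧ a k ≠ 0}

/-- `Λ₁ = {[a] : a ∈ Ψ⁴, |Supp a| = 1}`. -/
def Lambda1 : Set Phi := {c | ∃ a : V, cls a = c ∧ PsiV a ∧ (Supp a).ncard = 1}

/-- `Λ₂ = {[a] : a ∈ Ψ⁴, |Supp a| = 2}`. -/
def Lambda2 : Set Phi := {c | ∃ a : V, cls a = c ∧ PsiV a ∧ (Supp a).ncard = 2}

/-- `Λ₃ = {[a] : a ∈ Ψ⁴, |Supp a| = 4, prod a = ±1}`. -/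
def Lambda3 : Set Phi :=
  {c | ∃ a : V, cls a = c ∧ PsiV a ∧ (Supp a).ncard = 4 ∧ (prod4 a = 1 ∨ prod4 a = -1)}

/-- `Λ = Λ₁ ⊔ Λ₂ ⊔ Λ₃`, the hyperplanes of the reflection arrangement of type `G₃₁`. -/
def Lambda : Set Phi := Lambda1 ∪ Lambda2 ∪ Lambda3

/-- `Λ̂(a,b) = {[c] ∈ Λ : X_c ⊇ X_a ∩ X_b}` (all notions independent of representatives). -/
def LambdaHat (A B : Phi) : Set Phi :=
  {c | c ∈ Lambda ∧ ∃ xa xb xc : V, cls xa = A ∧ cls xb = B ∧ cls xc = c ∧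
    Xa xa ∩ Xa xb ⊆ Xa xc}

/-- `mult(a,b) = |Λ̂(a,b)|`. -/
def mult (A B : Phi) : ℕ := (LambdaHat A B).ncard

/-- `Λ(a,b) = Λ̂(a,b) \ {[a],[b]}`. -/
def LambdaAB (A B : Phi) : Set Phi := LambdaHat A B \ {A, B}

/-- `Λ_{j'}^m(a) = {[b] ∈ Λ_{j'} : [b] ≠ [a], mult(a,b) = m}`, where `S` stands for `Λ_{j'}`. -/
def LambdaPow (S : Set Phi) (m : ℕ) (A : Phi) : Set Phi :=
  {B | B ∈ S ∧ B ≠ A ∧ mult A B = m}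

/-- `diff([a],[b]) = min_ξ |Supp (ξ a − b)|`, the minimum over representatives. -/
def diffC (A B : Phi) : ℕ :=
  sInf {n | ∃ a b : V, cls a = A ∧ cls b = B ∧ (Supp (a - b)).ncard = n}

end G31

namespace G31

/-!
The diagonal action of `u ∈ μ₄⁴` with `u₁u₂u₃u₄ = ±1` on `ℂ⁴` permutes each `Λⱼ` and transports
the hyperplanes `X_a`, so it preserves `mult` and every count `|Λⱼᵐ(a)|`. Since
`[a] = a · [1,1,1,1]` for `[a] ∈ Λ₃`, it suffices to count at `[1,1,1,1]`. There the question is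
finite: every class of `Λ` has a unique representative in `{0, ±1, ±i}⁴ ⊂ ℤ[i]⁴` whose first
nonzero entry is `1`, and for non-proportional `a, b` one has `X_a ∩ X_b ⊆ X_c` iff the `3 × 3`
minors of `(a; b; c)` through a nonvanishing `2 × 2` minor of `(a; b)` vanish. The resulting
counts are checked by the kernel.
-/

local notation "ℤ[i]" => GaussianInt

section Minors

variable {R S ι : Type*} [CommRing R] [CommRing S]

def minor2 (x y : ι → R) (i j : ι) : R := x i * y j - x j * y i

def minor3 (x y z : ι → R) (i j k : ι) : R :=
  z i * minor2 x y j k - z j * minor2 x y i k + z k * minor2 x y i j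

lemma map_minor2 (f : R →+* S) (x y : ι → R) (i j : ι) :
    minor2 (fun l => f (x l)) (fun l => f (y l)) i j = f (minor2 x y i j) := by
  simp only [minor2, map_sub, map_mul]

lemma map_minor3 (f : R →+* S) (x y z : ι → R) (i j k : ι) :
    minor3 (fun l => f (x l)) (fun l => f (y l)) (fun l => f (z l)) i j k =
      f (minor3 x y z i j k) := by
  simp only [minor3, map_minor2, map_add, map_sub, map_mul]

end Minors

section Hyperplanes

lemma Xa_smul {ξ : ℂ} (hξ : ξ ≠ 0) (a : V) : Xa (ξ • a) = Xa a := by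
  ext x
  simp only [Xa, Set.mem_ofPred_eq, Pi.smul_apply, smul_eq_mul, mul_assoc, ← Finset.mul_sum,
    mul_eq_zero, hξ, false_or]

lemma Xa_eq_of_rel {a b : V} (h : rel a b) : Xa a = Xa b := by
  obtain ⟨ξ, hξ, rfl⟩ := h
  exact (Xa_smul (by rintro rfl; norm_num at hξ) a).symm

def hyperplane : Phi → Set V := Quotient.lift Xa fun _ _ => Xa_eq_of_rel

lemma mem_LambdaHat {A B C : Phi} :
    C ∈ LambdaHat A B ↔ C ∈ Lambda ∧ hyperplane A ∩ hyperplane B ⊆ hyperplane C := by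
  constructor
  · rintro ⟨hC, xa, xb, xc, rfl, rfl, rfl, h⟩
    exact ⟨hC, h⟩
  · induction A, B, C using Quotient.inductionOn₃ with
    | h a b c => exact fun ⟨hC, h⟩ => ⟨hC, a, b, c, rfl, rfl, rfl, h⟩

lemma minor3_eq_zero_of_inter_subset {a b c : V} (h : Xa a ∩ Xa b ⊆ Xa c) (i j k : Fin 4) :
    minor3 a b c i j k = 0 := by
  let w : V := Pi.single i (minor2 a b j k) - Pi.single j (minor2 a b i k) +
    Pi.single k (minor2 a b i j)
  have hw : ∀ x : V, w ∈ Xa x ↔ minor3 a b x i j k = 0 := by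
    intro x
    simp [Xa, w, minor3, mul_add, mul_sub, Finset.sum_add_distrib, Finset.sum_sub_distrib,
      Pi.single_apply]
  have hwab : w ∈ Xa a ∩ Xa b := by
    constructor <;> rw [hw] <;> simp only [minor3, minor2] <;> ring
  exact (hw c).mp (h hwab)

lemma inter_subset_of_minor3_eq_zero {a b c : V} {i j : Fin 4} (hab : minor2 a b i j ≠ 0)
    (hc : ∀ k, minor3 a b c i j k = 0) : Xa a ∩ Xa b ⊆ Xa c := by
  have hcomb : ∀ k, c k = minor2 c b i j / minor2 a b i j * a k +
      minor2 a c i j / minor2 a b i j * b k := by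
    intro k
    field_simp
    have hk := hc k
    simp only [minor3, minor2] at hk ⊢
    linear_combination hk
  rintro x ⟨ha, hb⟩
  simp only [Xa, Set.mem_ofPred_eq] at ha hb ⊢
  simp only [hcomb, add_mul, Finset.sum_add_distrib, mul_assoc, ← Finset.mul_sum, ha, hb,
    mul_zero, add_zero]

lemma inter_subset_iff_minor3 {a b c : V} {i j : Fin 4} (hab : minor2 a b i j ≠ 0) :
    Xa a ∩ Xa b ⊆ Xa c ↔ ∀ k, minor3 a b c i j k = 0 :=
  ⟨fun h k => minor3_eq_zero_of_inter_subset h i j k, inter_subset_of_minor3_eq_zero hab⟩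

end Hyperplanes

section Scaling

variable {u : V}

lemma rel_mul (u : V) {a b : V} (h : rel a b) : rel (u * a) (u * b) := by
  obtain ⟨ξ, hξ, rfl⟩ := h
  exact ⟨ξ, hξ, mul_smul_comm ξ u a⟩

def scale (u : V) : Phi → Phi := Quotient.map (u * ·) fun _ _ => rel_mul u

lemma scale_scale (u v : V) (A : Phi) : scale u (scale v A) = scale (u * v) A := by
  induction A using Quotient.inductionOn with
  | h a => exact congrArg cls (mul_assoc u v a).symm

lemma scale_one (A : Phi) : scale 1 A = A := by
  induction A using Quotient.inductionOn with
  | h a => exact congrArg cls (one_mul a)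

lemma scale_pow_three_scale (hu : u ^ 4 = 1) (A : Phi) : scale (u ^ 3) (scale u A) = A := by
  rw [scale_scale, ← pow_succ, hu, scale_one]

lemma scale_bijective (hu : u ^ 4 = 1) : Function.Bijective (scale u) :=
  Function.bijective_iff_has_inverse.mpr ⟨scale (u ^ 3), scale_pow_three_scale hu,
    fun A => by rw [scale_scale, ← pow_succ', hu, scale_one]⟩

lemma pow_three_pow_four (hu : u ^ 4 = 1) : (u ^ 3) ^ 4 = 1 := by
  rw [← pow_mul, mul_comm, pow_mul, hu, one_pow]

lemma pow_four_apply (hu : u ^ 4 = 1) (k : Fin 4) : u k ^ 4 = 1 := by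
  simpa using congrFun hu k

lemma ne_zero_of_pow_four (hu : u ^ 4 = 1) (k : Fin 4) : u k ≠ 0 := by
  intro h
  simpa [h] using pow_four_apply hu k

lemma PsiV_mul (hu : u ^ 4 = 1) {a : V} (ha : PsiV a) : PsiV (u * a) := by
  intro k
  rcases ha k with h | h
  · exact Or.inl (by simp [h])
  · refine Or.inr ?_
    simp only [mu4, Set.mem_ofPred_eq, Pi.mul_apply, mul_pow, pow_four_apply hu k, one_mul] at h ⊢
    exact h

lemma Supp_mul (hu : u ^ 4 = 1) (a : V) : Supp (u * a) = Supp a := by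
  ext k
  simp [Supp, ne_zero_of_pow_four hu k]

lemma prod4_mul (u a : V) : prod4 (u * a) = prod4 u * prod4 a :=
  Finset.prod_mul_distrib

lemma prod4_pow_three (hpu : prod4 u = 1 ∨ prod4 u = -1) :
    prod4 (u ^ 3) = 1 ∨ prod4 (u ^ 3) = -1 := by
  have h3 : prod4 (u ^ 3) = prod4 u ^ 3 := by simp only [prod4, Pi.pow_apply, Finset.prod_pow]
  rcases hpu with h | h <;> norm_num [h3, h]

lemma scale_mem_Lambda1 (hu : u ^ 4 = 1) {B : Phi} (hB : B ∈ Lambda1) : scale u B ∈ Lambda1 := by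
  obtain ⟨a, rfl, ha, hsupp⟩ := hB
  exact ⟨u * a, rfl, PsiV_mul hu ha, by rwa [Supp_mul hu]⟩

lemma scale_mem_Lambda2 (hu : u ^ 4 = 1) {B : Phi} (hB : B ∈ Lambda2) : scale u B ∈ Lambda2 := by
  obtain ⟨a, rfl, ha, hsupp⟩ := hB
  exact ⟨u * a, rfl, PsiV_mul hu ha, by rwa [Supp_mul hu]⟩

lemma scale_mem_Lambda3 (hu : u ^ 4 = 1) (hpu : prod4 u = 1 ∨ prod4 u = -1) {B : Phi}
    (hB : B ∈ Lambda3) : scale u B ∈ Lambda3 := by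
  obtain ⟨a, rfl, ha, hsupp, hpa⟩ := hB
  refine ⟨u * a, rfl, PsiV_mul hu ha, by rwa [Supp_mul hu], ?_⟩
  rw [prod4_mul]
  rcases hpu with h | h <;> rcases hpa with h' | h' <;> simp [h, h']

lemma scale_mem_iff {S : Set Phi} (hu : u ^ 4 = 1) (hS : ∀ B ∈ S, scale u B ∈ S)
    (hS' : ∀ B ∈ S, scale (u ^ 3) B ∈ S) (B : Phi) : scale u B ∈ S ↔ B ∈ S :=
  ⟨fun h => scale_pow_three_scale hu B ▸ hS' _ h, hS B⟩

lemma scale_mem_Lambda1_iff (hu : u ^ 4 = 1) (B : Phi) : scale u B ∈ Lambda1 ↔ B ∈ Lambda1 :=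
  scale_mem_iff hu (fun _ => scale_mem_Lambda1 hu)
    (fun _ => scale_mem_Lambda1 (pow_three_pow_four hu)) B

lemma scale_mem_Lambda2_iff (hu : u ^ 4 = 1) (B : Phi) : scale u B ∈ Lambda2 ↔ B ∈ Lambda2 :=
  scale_mem_iff hu (fun _ => scale_mem_Lambda2 hu)
    (fun _ => scale_mem_Lambda2 (pow_three_pow_four hu)) B

lemma scale_mem_Lambda3_iff (hu : u ^ 4 = 1) (hpu : prod4 u = 1 ∨ prod4 u = -1) (B : Phi) :
    scale u B ∈ Lambda3 ↔ B ∈ Lambda3 :=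
  scale_mem_iff hu (fun _ => scale_mem_Lambda3 hu hpu)
    (fun _ => scale_mem_Lambda3 (pow_three_pow_four hu) (prod4_pow_three hpu)) B

lemma scale_mem_Lambda_iff (hu : u ^ 4 = 1) (hpu : prod4 u = 1 ∨ prod4 u = -1) (C : Phi) :
    scale u C ∈ Lambda ↔ C ∈ Lambda := by
  simp only [Lambda, Set.mem_union, scale_mem_Lambda1_iff hu, scale_mem_Lambda2_iff hu,
    scale_mem_Lambda3_iff hu hpu]

lemma hyperplane_scale (u : V) (C : Phi) :
    hyperplane (scale u C) = (u * ·) ⁻¹' hyperplane C := by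
  induction C using Quotient.inductionOn with
  | h c =>
    ext x
    change x ∈ Xa (u * c) ↔ u * x ∈ Xa c
    simp only [Xa, Set.mem_ofPred_eq, Pi.mul_apply, mul_left_comm (c _), mul_assoc]

lemma LambdaHat_scale (hu : u ^ 4 = 1) (hL : ∀ C, scale u C ∈ Lambda ↔ C ∈ Lambda)
    (A B : Phi) : LambdaHat (scale u A) (scale u B) = scale u '' LambdaHat A B := by
  have hsurj : Function.Surjective (u * · : V → V) := fun x =>
    ⟨u ^ 3 * x, by dsimp only; rw [← mul_assoc, ← pow_succ', hu, one_mul]⟩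
  ext C
  obtain ⟨C, rfl⟩ := (scale_bijective hu).surjective C
  rw [(scale_bijective hu).injective.mem_set_image]
  simp only [mem_LambdaHat, hL, hyperplane_scale, ← Set.preimage_inter,
    Set.preimage_subset_preimage_iff (hsurj.range_eq ▸ Set.subset_univ _)]

lemma mult_scale (hu : u ^ 4 = 1) (hL : ∀ C, scale u C ∈ Lambda ↔ C ∈ Lambda) (A B : Phi) :
    mult (scale u A) (scale u B) = mult A B := by
  rw [mult, mult, LambdaHat_scale hu hL,
    Set.ncard_image_of_injective _ (scale_bijective hu).injective]

lemma ncard_LambdaPow_scale (hu : u ^ 4 = 1) (hL : ∀ C, scale u C ∈ Lambda ↔ C ∈ Lambda)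
    {S : Set Phi} (hS : ∀ B, scale u B ∈ S ↔ B ∈ S) (n : ℕ) (A : Phi) :
    (LambdaPow S n (scale u A)).ncard = (LambdaPow S n A).ncard := by
  have himage : LambdaPow S n (scale u A) = scale u '' LambdaPow S n A := by
    ext B
    obtain ⟨B, rfl⟩ := (scale_bijective hu).surjective B
    rw [(scale_bijective hu).injective.mem_set_image]
    simp only [LambdaPow, Set.mem_ofPred_eq, hS, (scale_bijective hu).injective.ne_iff,
      mult_scale hu hL]
  rw [himage, Set.ncard_image_of_injective _ (scale_bijective hu).injective]

lemma exists_scale_cls_one_eq {A : Phi} (hA : A ∈ Lambda3) :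
    ∃ u : V, u ^ 4 = 1 ∧ (prod4 u = 1 ∨ prod4 u = -1) ∧ scale u (cls 1) = A := by
  obtain ⟨a, rfl, ha, hsupp, hpa⟩ := hA
  have hSupp : Supp a = Set.univ :=
    Set.eq_of_subset_of_ncard_le (Set.subset_univ _) (by simp [hsupp])
  refine ⟨a, funext fun k => ?_, hpa, congrArg cls (mul_one a)⟩
  have hk : a k ≠ 0 := (hSupp ▸ Set.mem_univ k : k ∈ Supp a)
  rcases ha k with h | h
  · exact absurd h hk
  · simpa [mu4] using h

end Scaling

section Model

abbrev GVec : Type := Fin 4 → ℤ[i]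

def toV (m : GVec) : V := fun k => (m k : ℂ)

def clsG (m : GVec) : Phi := cls (toV m)

lemma clsG_one : clsG 1 = cls 1 := congrArg cls (funext fun _ => map_one _)

lemma toV_injective : Function.Injective toV := fun _ _ h =>
  funext fun k => GaussianInt.toComplex_injective (congrFun h k)

lemma toV_smul (u : ℤ[i]) (m : GVec) : toV (u • m) = (u : ℂ) • toV m :=
  funext fun _ => map_mul _ _ _

lemma minor2_toV (p q : GVec) (i j : Fin 4) :
    minor2 (toV p) (toV q) i j = minor2 p q i j :=
  map_minor2 GaussianInt.toComplex p q i j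

lemma minor3_toV (p q r : GVec) (i j k : Fin 4) :
    minor3 (toV p) (toV q) (toV r) i j k = minor3 p q r i j k :=
  map_minor3 GaussianInt.toComplex p q r i j k

def unitValues : List ℤ[i] := [1, -1, ⟨0, 1⟩, ⟨0, -1⟩]

def psiValues : List ℤ[i] := 0 :: unitValues

lemma pow_four_of_mem_unitValues : ∀ u ∈ unitValues, u ^ 4 = 1 := by decide

lemma ne_zero_of_mem_unitValues : ∀ u ∈ unitValues, u ≠ 0 := by decide

lemma mul_mem_psiValues : ∀ u ∈ unitValues, ∀ w ∈ psiValues, u * w ∈ psiValues := by decide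

lemma eq_of_pow_four_eq_one {z : ℂ} (h : z ^ 4 = 1) : z = 1 ∨ z = -1 ∨ z = I ∨ z = -I := by
  have h4 : (z - 1) * (z + 1) * (z - I) * (z + I) = 0 := by
    linear_combination h + (1 - z ^ 2) * I_sq
  simp only [mul_eq_zero, sub_eq_zero, add_eq_zero_iff_eq_neg] at h4
  tauto

lemma exists_mem_unitValues {ξ : ℂ} (h : ξ ^ 4 = 1) : ∃ u ∈ unitValues, (u : ℂ) = ξ := by
  rcases eq_of_pow_four_eq_one h with rfl | rfl | rfl | rfl
  · exact ⟨1, by decide, map_one _⟩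
  · exact ⟨-1, by decide, by simp⟩
  · exact ⟨⟨0, 1⟩, by decide, by simp [GaussianInt.toComplex_def']⟩
  · exact ⟨⟨0, -1⟩, by decide, by simp [GaussianInt.toComplex_def']⟩

lemma mem_Psi_iff {z : ℂ} : z ∈ Psi ↔ ∃ w ∈ psiValues, (w : ℂ) = z := by
  constructor
  · rintro (rfl | h)
    · exact ⟨0, List.mem_cons_self, map_zero _⟩
    · obtain ⟨u, hu, rfl⟩ := exists_mem_unitValues h
      exact ⟨u, List.mem_cons_of_mem 0 hu, rfl⟩
  · rintro ⟨w, hw, rfl⟩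
    rcases List.mem_cons.mp hw with rfl | hu
    · exact Or.inl (map_zero _)
    · refine Or.inr ?_
      rw [mu4, Set.mem_ofPred_eq, ← map_pow, pow_four_of_mem_unitValues w hu, map_one]

def psiVectors : List GVec :=
  psiValues.flatMap fun a => psiValues.flatMap fun b => psiValues.flatMap fun c =>
    psiValues.map fun d => ![a, b, c, d]

lemma mem_psiVectors_iff {m : GVec} : m ∈ psiVectors ↔ ∀ k, m k ∈ psiValues := by
  constructor
  · simp only [psiVectors, List.mem_flatMap, List.mem_map]
    rintro ⟨a, ha, b, hb, c, hc, d, hd, rfl⟩ k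
    fin_cases k <;> assumption
  · intro hm
    have hm' : m = ![m 0, m 1, m 2, m 3] := by
      funext k
      fin_cases k <;> rfl
    rw [hm', psiVectors]
    simp only [List.mem_flatMap, List.mem_map]
    exact ⟨_, hm 0, _, hm 1, _, hm 2, _, hm 3, rfl⟩

lemma PsiV_iff {a : V} : PsiV a ↔ ∃ m ∈ psiVectors, toV m = a := by
  constructor
  · intro ha
    choose m hm using fun k => mem_Psi_iff.mp (ha k)
    exact ⟨m, mem_psiVectors_iff.mpr fun k => (hm k).1, funext fun k => (hm k).2⟩
  · rintro ⟨m, hm, rfl⟩ k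
    exact mem_Psi_iff.mpr ⟨m k, mem_psiVectors_iff.mp hm k, rfl⟩

def suppCard (m : GVec) : ℕ := (Finset.univ.filter fun k => m k ≠ 0).card

lemma ncard_Supp_toV (m : GVec) : (Supp (toV m)).ncard = suppCard m := by
  have hS : Supp (toV m) = ↑(Finset.univ.filter fun k => m k ≠ 0) := by
    ext k
    simp [Supp, toV, GaussianInt.toComplex_eq_zero]
  rw [hS, Set.ncard_coe_finset, suppCard]

lemma prod4_toV_eq_one_or_neg_one_iff (m : GVec) :
    (prod4 (toV m) = 1 ∨ prod4 (toV m) = -1) ↔ (∏ k, m k = 1 ∨ ∏ k, m k = -1) := by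
  have hprod : prod4 (toV m) = ((∏ k, m k : ℤ[i]) : ℂ) := (map_prod _ _ _).symm
  rw [hprod, ← GaussianInt.toComplex_one, ← map_neg, GaussianInt.toComplex_inj,
    GaussianInt.toComplex_inj]

lemma suppCard_smul {u : ℤ[i]} (hu : u ∈ unitValues) (m : GVec) :
    suppCard (u • m) = suppCard m := by
  simp [suppCard, ne_zero_of_mem_unitValues u hu]

lemma prod_smul {u : ℤ[i]} (hu : u ∈ unitValues) (m : GVec) : ∏ k, (u • m) k = ∏ k, m k := by
  simp [Finset.prod_mul_distrib, pow_four_of_mem_unitValues u hu]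

abbrev IsLambda1 (m : GVec) : Prop := suppCard m = 1

abbrev IsLambda2 (m : GVec) : Prop := suppCard m = 2

abbrev IsLambda3 (m : GVec) : Prop := suppCard m = 4 ∧ (∏ k, m k = 1 ∨ ∏ k, m k = -1)

abbrev IsLambda (m : GVec) : Prop := IsLambda1 m ∨ IsLambda2 m ∨ IsLambda3 m

abbrev IsNormalized (m : GVec) : Prop := (List.ofFn m).find? (· ≠ 0) = some 1

lemma exists_isNormalized_smul :
    ∀ m ∈ psiVectors, m ≠ 0 → ∃ u ∈ unitValues, IsNormalized (u • m) := by
  decide +kernel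

lemma eq_one_of_isNormalized_smul :
    ∀ m ∈ psiVectors, IsNormalized m → ∀ u ∈ unitValues, IsNormalized (u • m) → u = 1 := by
  decide +kernel

def canonical (P : GVec → Prop) [DecidablePred P] : Finset GVec :=
  (psiVectors.filter fun m => IsNormalized m ∧ P m).toFinset

variable {P Q : GVec → Prop} [DecidablePred P] [DecidablePred Q]

lemma mem_canonical {m : GVec} :
    m ∈ canonical P ↔ m ∈ psiVectors ∧ IsNormalized m ∧ P m := by
  simp [canonical]

lemma canonical_mono (h : ∀ m, P m → Q m) : canonical P ⊆ canonical Q := fun m hm => by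
  obtain ⟨hm, hn, hP⟩ := mem_canonical.mp hm
  exact mem_canonical.mpr ⟨hm, hn, h m hP⟩

lemma clsG_smul {u : ℤ[i]} (hu : u ∈ unitValues) (m : GVec) : clsG (u • m) = clsG m := by
  have hrel : rel (toV m) (toV (u • m)) := ⟨u, by
    rw [← map_pow, pow_four_of_mem_unitValues u hu, map_one], toV_smul u m⟩
  exact (Quotient.sound hrel).symm

lemma clsG_injOn : Set.InjOn clsG (canonical P) := by
  intro p hp q hq h
  obtain ⟨hp, hpn, -⟩ := mem_canonical.mp hp
  obtain ⟨-, hqn, -⟩ := mem_canonical.mp hq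
  obtain ⟨ξ, hξ, hpq⟩ := Quotient.exact h
  obtain ⟨u, hu, rfl⟩ := exists_mem_unitValues hξ
  obtain rfl : q = u • p := toV_injective (by rw [toV_smul]; exact hpq)
  rw [eq_one_of_isNormalized_smul p hp hpn u hu hqn, one_smul]

lemma setOf_cls_eq_image_canonical {R : V → Prop} (hR : ∀ m, R (toV m) ↔ P m)
    (hP : ∀ u ∈ unitValues, ∀ m, P (u • m) ↔ P m) (hP0 : ¬ P 0) :
    {c | ∃ a, cls a = c ∧ PsiV a ∧ R a} = clsG '' canonical P := by
  ext c
  constructor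
  · rintro ⟨a, rfl, ha, hRa⟩
    obtain ⟨m, hm, rfl⟩ := PsiV_iff.mp ha
    have hPm := (hR m).mp hRa
    obtain ⟨u, hu, hnorm⟩ := exists_isNormalized_smul m hm (by rintro rfl; exact hP0 hPm)
    have hum : u • m ∈ psiVectors := mem_psiVectors_iff.mpr fun k =>
      mul_mem_psiValues u hu _ (mem_psiVectors_iff.mp hm k)
    exact ⟨u • m, mem_canonical.mpr ⟨hum, hnorm, (hP u hu m).mpr hPm⟩, clsG_smul hu m⟩
  · rintro ⟨m, hm, rfl⟩
    obtain ⟨hm, -, hPm⟩ := mem_canonical.mp hm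
    exact ⟨toV m, rfl, PsiV_iff.mpr ⟨m, hm, rfl⟩, (hR m).mpr hPm⟩

lemma Lambda1_eq : Lambda1 = clsG '' canonical IsLambda1 :=
  setOf_cls_eq_image_canonical (fun m => by rw [ncard_Supp_toV])
    (fun u hu m => by rw [IsLambda1, suppCard_smul hu]) (by decide)

lemma Lambda2_eq : Lambda2 = clsG '' canonical IsLambda2 :=
  setOf_cls_eq_image_canonical (fun m => by rw [ncard_Supp_toV])
    (fun u hu m => by rw [IsLambda2, suppCard_smul hu]) (by decide)

lemma Lambda3_eq : Lambda3 = clsG '' canonical IsLambda3 :=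
  setOf_cls_eq_image_canonical
    (fun m => by rw [ncard_Supp_toV, prod4_toV_eq_one_or_neg_one_iff])
    (fun u hu m => by rw [IsLambda3, suppCard_smul hu, prod_smul hu]) (by decide)

lemma Lambda_eq : Lambda = clsG '' canonical IsLambda := by
  have h : canonical IsLambda =
      canonical IsLambda1 ∪ canonical IsLambda2 ∪ canonical IsLambda3 := by
    ext m
    simp only [Finset.mem_union, mem_canonical]
    tauto
  rw [Lambda, Lambda1_eq, Lambda2_eq, Lambda3_eq, h, Finset.coe_union, Finset.coe_union,
    Set.image_union, Set.image_union]

def pivot (p q : GVec) : Fin 4 × Fin 4 :=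
  ((List.finRange 4 ×ˢ List.finRange 4).find? fun ij => minor2 p q ij.1 ij.2 ≠ 0).getD (0, 0)

abbrev Covers (p q r : GVec) : Prop := ∀ k, minor3 p q r (pivot p q).1 (pivot p q).2 k = 0

lemma inter_subset_iff_covers {p q r : GVec}
    (hpq : minor2 p q (pivot p q).1 (pivot p q).2 ≠ 0) :
    Xa (toV p) ∩ Xa (toV q) ⊆ Xa (toV r) ↔ Covers p q r := by
  rw [inter_subset_iff_minor3 (by rwa [minor2_toV, Ne, GaussianInt.toComplex_eq_zero])]
  simp only [Covers, minor3_toV, GaussianInt.toComplex_eq_zero]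

lemma mult_clsG {p q : GVec} (hpq : minor2 p q (pivot p q).1 (pivot p q).2 ≠ 0) :
    mult (clsG p) (clsG q) = ((canonical IsLambda).filter (Covers p q)).card := by
  have h : LambdaHat (clsG p) (clsG q) =
      clsG '' ((canonical IsLambda).filter (Covers p q) : Set GVec) := by
    ext C
    rw [mem_LambdaHat, Lambda_eq]
    constructor
    · rintro ⟨⟨r, hr, rfl⟩, h⟩
      exact ⟨r, Finset.mem_filter.mpr ⟨hr, (inter_subset_iff_covers hpq).mp h⟩, rfl⟩
    · rintro ⟨r, hr, rfl⟩
      obtain ⟨hr, hcov⟩ := Finset.mem_filter.mp hr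
      exact ⟨⟨r, hr, rfl⟩, (inter_subset_iff_covers hpq).mpr hcov⟩
  rw [mult, h, (clsG_injOn.mono (Finset.filter_subset _ _)).ncard_image, Set.ncard_coe_finset]

lemma minor2_pivot_one_ne_zero :
    ∀ q ∈ canonical IsLambda, q ≠ 1 → minor2 1 q (pivot 1 q).1 (pivot 1 q).2 ≠ 0 := by
  decide +kernel

lemma one_mem_canonical : (1 : GVec) ∈ canonical IsLambda := by
  decide +kernel

def multAtOne (q : GVec) : ℕ := ((canonical IsLambda).filter (Covers 1 q)).card

lemma ncard_LambdaPow_clsG_one (hP : canonical P ⊆ canonical IsLambda) {S : Set Phi}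
    (hS : S = clsG '' canonical P) (n : ℕ) :
    (LambdaPow S n (clsG 1)).ncard =
      ((canonical P).filter fun q => q ≠ 1 ∧ multAtOne q = n).card := by
  subst hS
  have h : LambdaPow (clsG '' canonical P) n (clsG 1) =
      clsG '' ((canonical P).filter fun q => q ≠ 1 ∧ multAtOne q = n : Set GVec) := by
    ext B
    constructor
    · rintro ⟨⟨q, hq, rfl⟩, hne, hmult⟩
      have hq1 : q ≠ 1 := by rintro rfl; exact hne rfl
      rw [mult_clsG (minor2_pivot_one_ne_zero q (hP hq) hq1)] at hmult
      exact ⟨q, Finset.mem_filter.mpr ⟨hq, hq1, hmult⟩, rfl⟩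
    · rintro ⟨q, hq, rfl⟩
      obtain ⟨hq, hq1, hmult⟩ := Finset.mem_filter.mp hq
      refine ⟨⟨q, hq, rfl⟩, fun h => hq1 (clsG_injOn (hP hq) one_mem_canonical h), ?_⟩
      rwa [mult_clsG (minor2_pivot_one_ne_zero q (hP hq) hq1)]
  rw [h, (clsG_injOn.mono (fun q hq => hP (Finset.mem_filter.mp hq).1)).ncard_image,
    Set.ncard_coe_finset]

end Model

/-- for every `[a] ∈ Λ₃`: `|Λ₁³(a)| = 4`, `|Λ₂²(a)| = 6`, `|Λ₂³(a)| = 12`,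
`|Λ₂⁶(a)| = 6`, `|Λ₃²(a)| = 6`, `|Λ₃³(a)| = 16`, `|Λ₃⁶(a)| = 9`, and
`|Λ₁²(a)| = |Λ₁⁶(a)| = 0`. -/
theorem stmt13 : ∀ A ∈ Lambda3,
    (LambdaPow Lambda1 3 A).ncard = 4 ∧
    (LambdaPow Lambda2 2 A).ncard = 6 ∧
    (LambdaPow Lambda2 3 A).ncard = 12 ∧
    (LambdaPow Lambda2 6 A).ncard = 6 ∧
    (LambdaPow Lambda3 2 A).ncard = 6 ∧
    (LambdaPow Lambda3 3 A).ncard = 16 ∧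
    (LambdaPow Lambda3 6 A).ncard = 9 ∧
    (LambdaPow Lambda1 2 A).ncard = 0 ∧
    (LambdaPow Lambda1 6 A).ncard = 0 := by
  intro A hA
  obtain ⟨u, hu, hpu, rfl⟩ := exists_scale_cls_one_eq hA
  have hL := scale_mem_Lambda_iff hu hpu
  simp only [ncard_LambdaPow_scale hu hL (scale_mem_Lambda1_iff hu),
    ncard_LambdaPow_scale hu hL (scale_mem_Lambda2_iff hu),
    ncard_LambdaPow_scale hu hL (scale_mem_Lambda3_iff hu hpu), ← clsG_one,
    ncard_LambdaPow_clsG_one (canonical_mono fun _ => Or.inl) Lambda1_eq,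
    ncard_LambdaPow_clsG_one (canonical_mono fun _ h => Or.inr (Or.inl h)) Lambda2_eq,
    ncard_LambdaPow_clsG_one (canonical_mono fun _ h => Or.inr (Or.inr h)) Lambda3_eq]
  decide +kernel

end G31
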